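/- Let α = t a_1 s_2 … s_{m−1} a_{m−1} t be a finite cyclic path that starts and ends at the same state t, where t is a reload state (t ∈ R), and suppose α is safe with capacity cap. Then for every k ≥ 1, the path obtained by concatenating k copies of α (gluing the endpoint t of each copy with the start of the next) is safe with capacity cap; i.e., the cycle can be repeated arbitrarily many times without the resource level ever dropping below 0. -/

import Mathlib

open Classical in
/-- The resource levels `r_1, …, r_n` of a finite path.  A path starting at
state `s` with steps `(a_1, s_2), (a_2, s_3), …` is represented by `s` and the
list of (action, next-state) pairs.  `resLevelsAux γ R cap s r steps` is the
list of levels starting with the current level `r`; `⊥` is `none`. -/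
noncomputable def resLevelsAux {S A : Type*} (γ : S → A → ℕ) (R : Set S) (cap : ℕ) :
    S → Option ℕ → List (A × S) → List (Option ℕ)
  | _, r, [] => [r]
  | s, r, (a, t) :: rest =>
      r :: resLevelsAux γ R cap t
        (match r with
         | none => none
         | some x =>
            if s ∈ R then (if γ s a ≤ cap then some (cap - γ s a) else none)
            else (if γ s a ≤ x then some (x - γ s a) else none))
        rest

/-- The resource levels of the path `(s, steps)` with capacity `cap`
(the first level is `cap`). -/
noncomputable def resLevels {S A : Type*} (γ : S → A → ℕ) (R : Set S) (cap : ℕ)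
    (s : S) (steps : List (A × S)) : List (Option ℕ) :=
  resLevelsAux γ R cap s (some cap) steps

/-- A path is safe with capacity `cap` if `⊥` does not occur among its
resource levels. -/
noncomputable def SafePath {S A : Type*} (γ : S → A → ℕ) (R : Set S) (cap : ℕ)
    (s : S) (steps : List (A × S)) : Prop :=
  none ∉ resLevels γ R cap s steps

/-- The last state of the path `(s, steps)`. -/
def lastState {S A : Type*} (s : S) (steps : List (A × S)) : S :=
  (steps.getLast?.map Prod.snd).getD s


open Classical in
noncomputable def finalLevel {S A : Type*} (γ : S → A → ℕ) (R : Set S) (cap : ℕ) :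
    S → Option ℕ → List (A × S) → Option ℕ
  | _, r, [] => r
  | s, r, (a, t) :: rest =>
      finalLevel γ R cap t
        (match r with
         | none => none
         | some x =>
            if s ∈ R then (if γ s a ≤ cap then some (cap - γ s a) else none)
            else (if γ s a ≤ x then some (x - γ s a) else none))
        rest

section
variable {S A : Type*} (γ : S → A → ℕ) (R : Set S) (cap : ℕ)

lemma resLevelsAux_ne_nil (s : S) (r : Option ℕ) (l : List (A × S)) :
    resLevelsAux γ R cap s r l ≠ [] := by
  cases l with
  | nil => simp [resLevelsAux]
  | cons p rest => obtain ⟨a, t⟩ := p; simp [resLevelsAux]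

lemma lastState_cons (s t : S) (a : A) (rest : List (A × S)) :
    lastState s ((a, t) :: rest) = lastState t rest := by
  cases rest with
  | nil => simp [lastState]
  | cons q l =>
      cases h : (q :: l).getLast? with
      | none => simp at h
      | some p => simp [lastState, h]

lemma resLevelsAux_append (l1 : List (A × S)) : ∀ (s : S) (r : Option ℕ) (l2 : List (A × S)),
    resLevelsAux γ R cap s r (l1 ++ l2) =
      (resLevelsAux γ R cap s r l1).dropLast ++
        resLevelsAux γ R cap (lastState s l1) (finalLevel γ R cap s r l1) l2 := by
  induction l1 with
  | nil => intro s r l2; simp [resLevelsAux, finalLevel, lastState]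
  | cons p rest ih =>
      obtain ⟨a, t⟩ := p
      intro s r l2
      simp only [List.cons_append, resLevelsAux, finalLevel, lastState_cons]
      rw [ih, List.dropLast_cons_of_ne_nil (resLevelsAux_ne_nil γ R cap t _ rest)]
      simp

lemma finalLevel_mem (l : List (A × S)) : ∀ (s : S) (r : Option ℕ),
    finalLevel γ R cap s r l ∈ resLevelsAux γ R cap s r l := by
  induction l with
  | nil => intro s r; simp [resLevelsAux, finalLevel]
  | cons p rest ih =>
      obtain ⟨a, t⟩ := p
      intro s r
      simp only [resLevelsAux, finalLevel, List.mem_cons]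
      exact Or.inr (ih t _)

lemma safe_indep (l : List (A × S)) (s : S) (hs : s ∈ R) (x y : ℕ) :
    none ∈ resLevelsAux γ R cap s (some x) l ↔ none ∈ resLevelsAux γ R cap s (some y) l := by
  cases l with
  | nil => simp [resLevelsAux]
  | cons p rest => obtain ⟨a, t⟩ := p; simp [resLevelsAux, hs]
end

theorem safePath_cycle_repeat {S A : Type*} (γ : S → A → ℕ) (R : Set S)
    (cap : ℕ) (t : S) (steps : List (A × S))
    (hlast : lastState t steps = t) (htR : t ∈ R)
    (hsafe : SafePath γ R cap t steps) :
    ∀ k : ℕ, 1 ≤ k → SafePath γ R cap t (List.replicate k steps).flatten := by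
  intro k hk
  induction k with
  | zero => omega
  | succ n ih =>
    cases n with
    | zero => simpa [SafePath] using hsafe
    | succ m =>
      have ih' := ih (by omega)
      unfold SafePath resLevels at *
      rw [List.replicate_succ, List.flatten_cons, resLevelsAux_append, hlast]
      intro hmem
      rcases List.mem_append.mp hmem with h1 | h2
      · exact hsafe ((List.dropLast_sublist _).mem h1)
      · have hfl : finalLevel γ R cap t (some cap) steps ≠ none := by
          intro h
          exact hsafe (h ▸ finalLevel_mem γ R cap steps t (some cap))
        obtain ⟨x, hx⟩ := Option.ne_none_iff_exists'.mp hfl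
        rw [hx] at h2
        exact ih' ((safe_indep γ R cap _ t htR x cap).mp h2)
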